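/- arXiv:1806.08356 — 3 statements merged into one kernel-verified Lean document; each statement's English description precedes it below -/
import Mathlib

section
/- (Incidence Axiom 1) For any two distinct points u, v ∈ H there exists a nonisotropic cycle m ∈ F with ⟨m, p⟩ = 0, ⟨m, q(u)⟩ = 0 and ⟨m, q(v)⟩ = 0; moreover, every cycle m' ∈ F satisfying ⟨m', p⟩ = 0, ⟨m', q(u)⟩ = 0 and ⟨m', q(v)⟩ = 0 is a scalar multiple of m. -/
variable {K : Type*} [Field K] [LinearOrder K] [IsStrictOrderedRing K]
variable {E : Type*} [AddCommGroup E] [Module K E]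

/-- The cycle pairing on the space of cycles `F = K × E × K`:
`⟨(a,b,c),(a',b',c')⟩ = B(b,b') − 2ac' − 2a'c`. -/
def cyc (B : LinearMap.BilinForm K E) (f g : K × E × K) : K :=
  B f.2.1 g.2.1 - 2 * f.1 * g.2.2 - 2 * g.1 * f.2.2

/-- The normalized zero circle centered at `u`: the cycle `(1, −2u, B(u,u))`. -/
def qc (B : LinearMap.BilinForm K E) (u : E) : K × E × K :=
  (1, (-2 : K) • u, B u u)

/-!
Cycles orthogonal to `p = (0, i, 0)` are the `(a, β • j, c)` with `j` spanning the kernel of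
`B i`, and `⟨m, q(w)⟩ = 0` reads `β * B j w + a * B w w + c = 0`. For distinct `u, v ∈ H` the
points `(B j u, B u u)` and `(B j v, B v v)` differ: otherwise `u - v` is a nonzero multiple of `i`
and `B u u - B v v = B (u - v) (u + v) ≠ 0`. So the two equations cut out a line in `(β, a, c)`,
spanned by their cross product. Nonisotropy comes from completing the square,
`⟨m, m⟩ = B w w + 2a ⟨m, q(u)⟩` with `w = b + 2a • u`, where `w ≠ 0` for `m ≠ 0` because
`B i b = 0` while `B i u < 0`.
-/

open Module

theorem Module.Dual.exists_ne_zero_forall_ker_eq_smul {𝕜 V : Type*} [Field 𝕜] [AddCommGroup V]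
    [Module 𝕜 V] {f : Dual 𝕜 V} (hf : f ≠ 0) (hdim : finrank 𝕜 V = 2) :
    ∃ j ≠ 0, f j = 0 ∧ ∀ x, f x = 0 → ∃ c : 𝕜, x = c • j := by
  have : FiniteDimensional 𝕜 V := .of_finrank_pos (by omega)
  have hker : finrank 𝕜 (LinearMap.ker f) = 1 := by
    have := f.finrank_ker_add_one_of_ne_zero hf
    omega
  obtain ⟨⟨j, hjf⟩, hj, hspan⟩ := finrank_eq_one_iff'.mp hker
  refine ⟨j, by simpa using hj, hjf, fun x hx => ?_⟩
  obtain ⟨c, hc⟩ := hspan ⟨x, hx⟩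
  exact ⟨c, congrArg Subtype.val hc.symm⟩

theorem exists_eq_mul_cross_of_two_eqns {𝕜 : Type*} [Field 𝕜] {x₁ y₁ x₂ y₂ : 𝕜}
    (hne : (x₁, y₁) ≠ (x₂, y₂)) {β a c : 𝕜} (h₁ : β * x₁ + a * y₁ + c = 0)
    (h₂ : β * x₂ + a * y₂ + c = 0) :
    ∃ t, β = t * (y₁ - y₂) ∧ a = t * (x₂ - x₁) ∧ c = t * (x₁ * y₂ - x₂ * y₁) := by
  have hdiff : β * (x₁ - x₂) + a * (y₁ - y₂) = 0 := by linear_combination h₁ - h₂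
  rcases eq_or_ne y₁ y₂ with hy | hy
  · have hx : x₁ ≠ x₂ := fun hx => hne (by rw [hx, hy])
    have hβ : β = 0 := by
      have : β * (x₁ - x₂) = 0 := by simpa [hy] using hdiff
      exact (mul_eq_zero.mp this).resolve_right (sub_ne_zero.mpr hx)
    have hx' : x₂ - x₁ ≠ 0 := sub_ne_zero.mpr hx.symm
    refine ⟨a / (x₂ - x₁), by simp [hβ, hy], by field_simp, ?_⟩
    subst hy hβ
    field_simp
    linear_combination (x₂ - x₁) * h₁
  · have hy' : y₁ - y₂ ≠ 0 := sub_ne_zero.mpr hy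
    refine ⟨β / (y₁ - y₂), by field_simp, ?_, ?_⟩
    · field_simp
      linear_combination hdiff
    · field_simp
      linear_combination (y₁ - y₂) * h₁ - y₁ * hdiff

section

variable {𝕜 V : Type*} [Field 𝕜] [AddCommGroup V] [Module 𝕜 V] (B : LinearMap.BilinForm 𝕜 V)

theorem cyc_point (m : 𝕜 × V × 𝕜) (i : V) : cyc B m (0, i, 0) = B m.2.1 i := by
  simp [cyc]

theorem cyc_qc (m : 𝕜 × V × 𝕜) (u : V) :
    cyc B m (qc B u) = -2 * (B m.2.1 u + m.1 * B u u + m.2.2) := by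
  simp only [cyc, qc, neg_smul, map_neg, map_smul, smul_eq_mul, mul_one, neg_mul]
  ring

theorem cyc_smul_qc (a β c : 𝕜) (j u : V) :
    cyc B (a, β • j, c) (qc B u) = -2 * (β * B j u + a * B u u + c) := by
  simp [cyc_qc]

theorem cyc_self_eq_add_cyc_qc (hsymm : ∀ x y : V, B x y = B y x) (m : 𝕜 × V × 𝕜) (u : V) :
    cyc B m m =
      B (m.2.1 + (2 * m.1) • u) (m.2.1 + (2 * m.1) • u) + 2 * m.1 * cyc B m (qc B u) := by
  simp only [cyc, qc, map_add, map_smul, LinearMap.add_apply, LinearMap.smul_apply, smul_eq_mul,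
    neg_smul, map_neg, mul_one, hsymm u m.2.1]
  ring

variable [LinearOrder 𝕜] [IsStrictOrderedRing 𝕜]

theorem cyc_self_pos (hsymm : ∀ x y : V, B x y = B y x)
    (hpos : ∀ x : V, x ≠ 0 → 0 < B x x)
    {i u : V} (hu : B i u < 0) {m : 𝕜 × V × 𝕜} (hm : m ≠ 0) (hmp : cyc B m (0, i, 0) = 0)
    (hmu : cyc B m (qc B u) = 0) : 0 < cyc B m m := by
  obtain ⟨a, b, c⟩ := m
  rw [cyc_self_eq_add_cyc_qc B hsymm _ u, hmu, mul_zero, add_zero]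
  refine hpos _ fun hw => hm ?_
  rw [cyc_point, hsymm] at hmp
  have ha : a = 0 := by
    have := congrArg (B i) hw
    simp only [map_add, map_smul, hmp, map_zero, smul_eq_mul, zero_add] at this
    simpa [hu.ne] using this
  have hb : b = 0 := by simpa [ha] using hw
  have hc : c = 0 := by simpa [cyc_qc, ha, hb] using hmu
  simp [ha, hb, hc]

theorem pair_ne_of_ne_of_apply_neg (hsymm : ∀ x y : V, B x y = B y x) {i j : V} (hi : B i i = 1)
    (hij : B i j = 0) (hjj : B j j ≠ 0) (hker : ∀ x, B i x = 0 → ∃ c : 𝕜, x = c • j)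
    {u v : V} (hu : B i u < 0) (hv : B i v < 0) (huv : u ≠ v) :
    (B j u, B u u) ≠ (B j v, B v v) := by
  intro h
  obtain ⟨hj, hsq⟩ := Prod.mk_inj.mp h
  set t := B i (u - v)
  have hw : u - v = t • i := by
    obtain ⟨c, hc⟩ := hker (u - v - t • i) (by simp [t, hi])
    have hc0 : c = 0 := by
      have := congrArg (B j) hc
      simp only [map_sub, map_smul, smul_eq_mul, hj, hsymm j i, hij] at this
      simpa [hjj] using this
    rw [hc0, zero_smul, sub_eq_zero] at hc
    exact hc
  have ht : t ≠ 0 := fun ht => huv (sub_eq_zero.mp (by simp [hw, ht]))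
  have hdiff : B u u - B v v = t * B i (u + v) := by
    calc B u u - B v v = B (u - v) (u + v) := by
          simp only [map_sub, map_add, LinearMap.sub_apply, hsymm u v]; ring
      _ = t * B i (u + v) := by simp [hw]
  exact mul_ne_zero ht (by rw [map_add]; exact (add_neg hu hv).ne) (hdiff ▸ sub_eq_zero.mpr hsq)

end

theorem incidence_axiom_one_general
    (B : LinearMap.BilinForm K E)
    (hdim : Module.finrank K E = 2)
    (hsymm : ∀ x y : E, B x y = B y x)
    (hpos : ∀ x : E, x ≠ 0 → 0 < B x x)
    (i : E) (hi : B i i = 1)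
    (u v : E) (hu : B i u < 0) (hv : B i v < 0) (huv : u ≠ v) :
    ∃ m : K × E × K, cyc B m m ≠ 0 ∧
      cyc B m ((0 : K), i, (0 : K)) = 0 ∧
      cyc B m (qc B u) = 0 ∧ cyc B m (qc B v) = 0 ∧
      ∀ m' : K × E × K, cyc B m' ((0 : K), i, (0 : K)) = 0 →
        cyc B m' (qc B u) = 0 → cyc B m' (qc B v) = 0 →
        ∃ c : K, m' = c • m := by
  obtain ⟨j, hj, hij, hker⟩ :=
    Module.Dual.exists_ne_zero_forall_ker_eq_smul (f := B i) (fun h => by simp [h] at hi) hdim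
  have hsep := pair_ne_of_ne_of_apply_neg B hsymm hi hij (hpos j hj).ne' hker hu hv huv
  set m : K × E × K := (B j v - B j u, (B u u - B v v) • j, B j u * B v v - B j v * B u u)
  have hm : m ≠ 0 := fun hm0 => hsep <| by
    simp only [m, Prod.mk_eq_zero, smul_eq_zero, hj, or_false, sub_eq_zero] at hm0
    rw [hm0.1, hm0.2.1]
  have hmp : cyc B m (0, i, 0) = 0 := by simp [m, cyc_point, hsymm _ i, hij]
  have hmu : cyc B m (qc B u) = 0 := by rw [cyc_smul_qc]; ring
  have hmv : cyc B m (qc B v) = 0 := by rw [cyc_smul_qc]; ring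
  refine ⟨m, (cyc_self_pos B hsymm hpos hu hm hmp hmu).ne', hmp, hmu, hmv,
    fun ⟨a', b', c'⟩ hp' hu' hv' => ?_⟩
  obtain ⟨β, rfl⟩ := hker b' (by rwa [cyc_point, hsymm] at hp')
  rw [cyc_smul_qc] at hu' hv'
  obtain ⟨t, hβ, ha, hc⟩ :=
    exists_eq_mul_cross_of_two_eqns hsep (by simpa using hu') (by simpa using hv')
  exact ⟨t, by simp [m, hβ, ha, hc, smul_smul]⟩

/-- Incidence Axiom 1: through any two distinct points of `H` there is a unique line. -/
theorem incidence_axiom_one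
    (B : LinearMap.BilinForm K E)
    (heuc : ∀ x : K, 0 ≤ x → ∃ y : K, y * y = x)
    (hdim : Module.finrank K E = 2)
    (hsymm : ∀ x y : E, B x y = B y x)
    (hpos : ∀ x : E, x ≠ 0 → 0 < B x x)
    (i : E) (hi : B i i = 1)
    (u v : E) (hu : B i u < 0) (hv : B i v < 0) (huv : u ≠ v) :
    ∃ m : K × E × K, cyc B m m ≠ 0 ∧
      cyc B m ((0 : K), i, (0 : K)) = 0 ∧
      cyc B m (qc B u) = 0 ∧ cyc B m (qc B v) = 0 ∧
      ∀ m' : K × E × K, cyc B m' ((0 : K), i, (0 : K)) = 0 →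
        cyc B m' (qc B u) = 0 → cyc B m' (qc B v) = 0 →
        ∃ c : K, m' = c • m :=
  incidence_axiom_one_general B hdim hsymm hpos i hi u v hu hv huv
end

section
/- For any u ∈ E, the cycle q(u) − 2⟨p, q(u)⟩·p equals q(u'), where u' = u − 2·B(i,u)·i; moreover ⟨p, q(u')⟩ = −⟨p, q(u)⟩, and for every cycle m with ⟨m, p⟩ = 0 one has ⟨m, q(u')⟩ = ⟨m, q(u)⟩. -/
variable {K : Type*} [Field K] [LinearOrder K] [IsStrictOrderedRing K]
variable {E : Type*} [AddCommGroup E] [Module K E]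

/- The map `u ↦ u - 2 B(i,u) i` is the orthogonal reflection in the line `i^⊥`: it negates
`B(i,u)` and fixes `B(u,u)`. Since `⟨p, q(u)⟩ = -2 B(i,u)`, subtracting `2⟨p,q(u)⟩ p` from `q(u)`
changes only its middle entry, into `-2u'`, so the result is the zero circle `q(u')`. Pairings
with cycles orthogonal to `p` do not see the subtracted multiple of `p`. -/

namespace LinearMap.BilinForm

variable {R M : Type*} [CommRing R] [AddCommGroup M] [Module R M]
variable (B : LinearMap.BilinForm R M) {i : M}

theorem apply_sub_smul_apply_self (hi : B i i = 1) (u : M) :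
    B i (u - (2 * B i u) • i) = -B i u := by
  rw [sub_right, smul_right, hi]
  ring

theorem apply_sub_smul_apply_sub_smul (hsymm : ∀ x y : M, B x y = B y x) (hi : B i i = 1)
    (u : M) : B (u - (2 * B i u) • i) (u - (2 * B i u) • i) = B u u := by
  rw [sub_left, smul_left, apply_sub_smul_apply_self B hi, sub_right, smul_right, hsymm u i]
  ring

end LinearMap.BilinForm

section Cycles

variable {𝕜 V : Type*} [Field 𝕜] [AddCommGroup V] [Module 𝕜 V] (B : LinearMap.BilinForm 𝕜 V)

theorem cyc_sub_smul_right (m f g : 𝕜 × V × 𝕜) (c : 𝕜) :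
    cyc B m (f - c • g) = cyc B m f - c * cyc B m g := by
  simp only [cyc, Prod.fst_sub, Prod.snd_sub, Prod.smul_fst, Prod.smul_snd, map_sub, map_smul,
    smul_eq_mul]
  ring

theorem cyc_vector_qc (v u : V) : cyc B (0, v, 0) (qc B u) = -2 * B v u := by
  simp only [cyc, qc, map_smul, smul_eq_mul]
  ring

theorem qc_sub_smul_vector (hsymm : ∀ x y : V, B x y = B y x) {i : V} (hi : B i i = 1) (u : V) :
    qc B u - (2 * cyc B (0, i, 0) (qc B u)) • ((0 : 𝕜), i, (0 : 𝕜))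
      = qc B (u - (2 * B i u) • i) := by
  rw [cyc_vector_qc, qc, qc, B.apply_sub_smul_apply_sub_smul hsymm hi]
  ext
  · simp
  · simp only [Prod.snd_sub, Prod.smul_snd, Prod.fst_sub, Prod.smul_fst, smul_sub, smul_smul]
    congr 1
    ring_nf
  · simp

end Cycles

theorem reflect_along_p_general
    (B : LinearMap.BilinForm K E)
    (hsymm : ∀ x y : E, B x y = B y x)
    (i : E) (hi : B i i = 1)
    (u : E) :
    qc B u - (2 * cyc B ((0 : K), i, (0 : K)) (qc B u)) • ((0 : K), i, (0 : K))
        = qc B (u - (2 * B i u) • i) ∧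
    cyc B ((0 : K), i, (0 : K)) (qc B (u - (2 * B i u) • i))
        = -cyc B ((0 : K), i, (0 : K)) (qc B u) ∧
    ∀ m : K × E × K, cyc B m ((0 : K), i, (0 : K)) = 0 →
      cyc B m (qc B (u - (2 * B i u) • i)) = cyc B m (qc B u) := by
  refine ⟨qc_sub_smul_vector B hsymm hi u, ?_, fun m hm => ?_⟩
  · rw [cyc_vector_qc, cyc_vector_qc, B.apply_sub_smul_apply_self hi]
    ring
  · rw [← qc_sub_smul_vector B hsymm hi u, cyc_sub_smul_right, hm, mul_zero, sub_zero]

/-- Reflection of a zero circle along `p`: `q(u) − 2⟨p, q(u)⟩·p = q(u')` with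
`u' = u − 2·B(i,u)·i`; moreover `⟨p, q(u')⟩ = −⟨p, q(u)⟩` and `⟨m, q(u')⟩ = ⟨m, q(u)⟩`
for every cycle `m` orthogonal to `p`. -/
theorem reflect_along_p
    (B : LinearMap.BilinForm K E)
    (heuc : ∀ x : K, 0 ≤ x → ∃ y : K, y * y = x)
    (hdim : Module.finrank K E = 2)
    (hsymm : ∀ x y : E, B x y = B y x)
    (hpos : ∀ x : E, x ≠ 0 → 0 < B x x)
    (i : E) (hi : B i i = 1)
    (u : E) :
    qc B u - (2 * cyc B ((0 : K), i, (0 : K)) (qc B u)) • ((0 : K), i, (0 : K))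
        = qc B (u - (2 * B i u) • i) ∧
    cyc B ((0 : K), i, (0 : K)) (qc B (u - (2 * B i u) • i))
        = -cyc B ((0 : K), i, (0 : K)) (qc B u) ∧
    ∀ m : K × E × K, cyc B m ((0 : K), i, (0 : K)) = 0 →
      cyc B m (qc B (u - (2 * B i u) • i)) = cyc B m (qc B u) :=
  reflect_along_p_general B hsymm i hi u
end

section
/- Let u, v, w be three pairwise distinct points of H that are collinear, i.e., there exists a nonisotropic cycle m with ⟨m, p⟩ = 0 and ⟨m, q(u)⟩ = ⟨m, q(v)⟩ = ⟨m, q(w)⟩ = 0. Then there exist a, b, c ∈ K, all nonzero, with p = a·q(u) + b·q(v) + c·q(w), and the three numbers a, b, c do not all have the same sign (exactly two of them have the same sign). -/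
variable {K : Type*} [Field K] [LinearOrder K] [IsStrictOrderedRing K]
variable {E : Type*} [AddCommGroup E] [Module K E]

/-!
The cycles orthogonal to the nonisotropic cycle `m` form a hyperplane of the 4-dimensional space
of cycles, containing `p` and the zero circles `q(u), q(v), q(w)`. Since
`⟨q(x), q(y)⟩ = -2 B(x - y, x - y)`, these are isotropic and pairwise non-orthogonal, hence
linearly independent, so they span the hyperplane: `p = a q(u) + b q(v) + c q(w)`. Pairing this
with `q(u)` gives `B(i, u) = b B(u - v, u - v) + c B(u - w, u - w) < 0`, and likewise for `v`
and `w`; pairing it with `p` gives `a B(i, u) + b B(i, v) + c B(i, w) = -1/2`. A vanishing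
coefficient, or three of the same sign, violates one of these inequalities.
-/

section

variable {k V : Type*} [Field k] [AddCommGroup V] [Module k V]

namespace LinearMap.BilinForm

theorem linearIndependent_fin3_of_isotropic [NeZero (2 : k)] {β : LinearMap.BilinForm k V}
    (hβ : β.IsSymm) {x y z : V} (hx : β x x = 0) (hy : β y y = 0) (hz : β z z = 0)
    (hxy : β x y ≠ 0) (hxz : β x z ≠ 0) (hyz : β y z ≠ 0) :
    LinearIndependent k ![x, y, z] := by
  rw [Fintype.linearIndependent_iff]
  intro g hg
  simp only [Fin.sum_univ_three, Matrix.cons_val_zero, Matrix.cons_val_one,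
    Matrix.cons_val_two, Matrix.head_cons, Matrix.tail_cons] at hg
  have hpair : ∀ t, g 0 * β t x + g 1 * β t y + g 2 * β t z = 0 := fun t => by
    simpa only [map_add, map_smul, smul_eq_mul, map_zero] using congrArg (β t) hg
  have ex : g 1 * β x y + g 2 * β x z = 0 := by simpa [hx] using hpair x
  have ey : g 0 * β x y + g 2 * β y z = 0 := by simpa [hy, hβ.eq y x] using hpair y
  have ez : g 0 * β x z + g 1 * β y z = 0 := by
    simpa [hz, hβ.eq z x, hβ.eq z y] using hpair z
  have h0 : g 0 = 0 := by
    have : g 0 * (2 * β x y * β x z) = 0 := by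
      linear_combination β x z * ey + β x y * ez - β y z * ex
    simpa [hxy, hxz, two_ne_zero] using this
  have h1 : g 1 = 0 := by
    have : g 1 * β y z = 0 := by linear_combination ez - β x z * h0
    simpa [hyz] using this
  have h2 : g 2 = 0 := by
    have : g 2 * β y z = 0 := by linear_combination ey - β x y * h0
    simpa [hyz] using this
  intro j
  fin_cases j <;> assumption

theorem apply_sub_sub_comm (β : LinearMap.BilinForm k V) (x y : V) :
    β (x - y) (x - y) = β (y - x) (y - x) := by
  rw [← neg_sub]
  simp only [map_neg, LinearMap.neg_apply, neg_neg]

end LinearMap.BilinForm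

theorem Module.Dual.span_eq_ker_of_linearIndependent {ι : Type*} [FiniteDimensional k V]
    [Fintype ι] {f : Module.Dual k V} (hf : f ≠ 0)
    {b : ι → V} (hb : LinearIndependent k b) (hcard : Fintype.card ι + 1 = Module.finrank k V)
    (hbf : ∀ j, f (b j) = 0) :
    Submodule.span k (Set.range b) = LinearMap.ker f := by
  refine Submodule.eq_of_le_of_finrank_eq
    (Submodule.span_le.2 (Set.range_subset_iff.2 hbf)) ?_
  have := f.finrank_ker_add_one_of_ne_zero hf
  rw [finrank_span_eq_card hb]
  omega

def cycForm (B : LinearMap.BilinForm k V) : LinearMap.BilinForm k (k × V × k) :=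
  LinearMap.mk₂ k (cyc B)
    (fun f f' g => by
      simp only [cyc, Prod.fst_add, Prod.snd_add, map_add, LinearMap.add_apply]; ring)
    (fun t f g => by
      simp only [cyc, Prod.smul_fst, Prod.smul_snd, map_smul, LinearMap.smul_apply,
        smul_eq_mul]; ring)
    (fun f g g' => by simp only [cyc, Prod.fst_add, Prod.snd_add, map_add]; ring)
    (fun t f g => by
      simp only [cyc, Prod.smul_fst, Prod.smul_snd, map_smul, smul_eq_mul]; ring)

variable {B : LinearMap.BilinForm k V}

@[simp]
theorem cycForm_apply (f g : k × V × k) : cycForm B f g = cyc B f g := rfl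

theorem isSymm_cycForm (hB : B.IsSymm) : (cycForm B).IsSymm :=
  ⟨fun f g => by simp only [cycForm_apply, cyc, hB.eq f.2.1 g.2.1]; ring⟩

theorem cycForm_qc_qc (hB : B.IsSymm) (x y : V) :
    cycForm B (qc B x) (qc B y) = -2 * B (x - y) (x - y) := by
  simp only [cycForm_apply, cyc, qc, map_smul, map_sub, LinearMap.smul_apply,
    LinearMap.sub_apply, smul_eq_mul]
  rw [hB.eq y x]
  ring

theorem cycForm_qc_self (hB : B.IsSymm) (x : V) : cycForm B (qc B x) (qc B x) = 0 := by
  simp [cycForm_qc_qc hB]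

theorem cycForm_qc_left (x i : V) : cycForm B (qc B x) (0, i, 0) = -2 * B x i := by
  simp only [cycForm_apply, cyc, qc, map_smul, LinearMap.smul_apply, smul_eq_mul]
  ring

theorem linearIndependent_qc [NeZero (2 : k)] (hB : B.IsSymm)
    (hB₀ : ∀ x, B x x = 0 → x = 0) {u v w : V} (huv : u ≠ v) (huw : u ≠ w) (hvw : v ≠ w) :
    LinearIndependent k ![qc B u, qc B v, qc B w] := by
  have hne : ∀ {x y : V}, x ≠ y → cycForm B (qc B x) (qc B y) ≠ 0 := fun h => by
    rw [cycForm_qc_qc hB]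
    exact mul_ne_zero (neg_ne_zero.2 two_ne_zero) fun h0 => h (sub_eq_zero.1 (hB₀ _ h0))
  exact LinearMap.BilinForm.linearIndependent_fin3_of_isotropic (isSymm_cycForm hB)
    (cycForm_qc_self hB u) (cycForm_qc_self hB v) (cycForm_qc_self hB w)
    (hne huv) (hne huw) (hne hvw)

theorem exists_sum_qc_eq [NeZero (2 : k)] (hB : B.IsSymm) (hB₀ : ∀ x, B x x = 0 → x = 0)
    (hdim : Module.finrank k V = 2) {u v w : V} (huv : u ≠ v) (huw : u ≠ w) (hvw : v ≠ w)
    {m f : k × V × k} (hm : cycForm B m m ≠ 0) (hmu : cycForm B m (qc B u) = 0)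
    (hmv : cycForm B m (qc B v) = 0) (hmw : cycForm B m (qc B w) = 0)
    (hmf : cycForm B m f = 0) :
    ∃ a b c : k, a • qc B u + b • qc B v + c • qc B w = f := by
  have : FiniteDimensional k V := .of_finrank_pos (by omega)
  have hspan := Module.Dual.span_eq_ker_of_linearIndependent (f := cycForm B m)
    (fun h => hm (by rw [h, LinearMap.zero_apply])) (linearIndependent_qc hB hB₀ huv huw hvw)
    (by simp [Module.finrank_prod, hdim]) fun j => by fin_cases j; exacts [hmu, hmv, hmw]
  rw [← Submodule.mem_span_triple, ← Set.singleton_union,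
    ← Matrix.range_cons_cons_empty _ _ ![], ← Matrix.range_cons, hspan]
  exact hmf

theorem apply_eq_of_sum_qc_eq [NeZero (2 : k)] (hB : B.IsSymm) {u v w i : V} {a b c : k}
    (hp : a • qc B u + b • qc B v + c • qc B w = (0, i, 0)) (x : V) :
    B x i = a * B (x - u) (x - u) + b * B (x - v) (x - v) + c * B (x - w) (x - w) := by
  have h := congrArg (cycForm B (qc B x)) hp
  simp only [map_add, map_smul, smul_eq_mul, cycForm_qc_qc hB, cycForm_qc_left] at h
  refine mul_left_cancel₀ (neg_ne_zero.2 (two_ne_zero' k)) ?_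
  linear_combination -h

theorem sum_apply_eq_of_sum_qc_eq {u v w i : V} {a b c : k}
    (hp : a • qc B u + b • qc B v + c • qc B w = (0, i, 0)) :
    2 * (a * B u i + b * B v i + c * B w i) = -B i i := by
  have h := congrArg (fun g => cycForm B g (0, i, 0)) hp
  simp only [map_add, map_smul, LinearMap.add_apply, LinearMap.smul_apply, smul_eq_mul,
    cycForm_qc_left] at h
  simp only [cycForm_apply, cyc, mul_zero, sub_zero] at h
  linear_combination -h

end

theorem ne_zero_and_not_same_sign {a b c r s t : K} (hr : 0 < r) (hs : 0 < s) (ht : 0 < t)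
    (hbc : b * r + c * s < 0) (hac : a * r + c * t < 0) (hab : a * s + b * t < 0)
    (habc : a * (b * r + c * s) + b * (a * r + c * t) + c * (a * s + b * t) < 0) :
    a ≠ 0 ∧ b ≠ 0 ∧ c ≠ 0 ∧ ¬((0 < a ∧ 0 < b ∧ 0 < c) ∨ (a < 0 ∧ b < 0 ∧ c < 0)) := by
  refine ⟨?_, ?_, ?_, ?_⟩
  · rintro rfl
    have hc : c < 0 := by nlinarith
    have hb : b < 0 := by nlinarith
    nlinarith [mul_pos_of_neg_of_neg hb hc]
  · rintro rfl
    have hc : c < 0 := by nlinarith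
    have ha : a < 0 := by nlinarith
    nlinarith [mul_pos_of_neg_of_neg ha hc]
  · rintro rfl
    have hb : b < 0 := by nlinarith
    have ha : a < 0 := by nlinarith
    nlinarith [mul_pos_of_neg_of_neg ha hb]
  · rintro (⟨-, hb, hc⟩ | ⟨ha, hb, hc⟩)
    · linarith [mul_pos hb hr, mul_pos hc hs]
    · linarith [mul_pos_of_neg_of_neg ha hbc, mul_pos_of_neg_of_neg hb hac,
        mul_pos_of_neg_of_neg hc hab]

theorem collinear_relation_general
    (B : LinearMap.BilinForm K E)
    (hdim : Module.finrank K E = 2)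
    (hsymm : ∀ x y : E, B x y = B y x)
    (hpos : ∀ x : E, x ≠ 0 → 0 < B x x)
    (i : E) (hi : B i i = 1)
    (u v w : E) (hu : B i u < 0) (hv : B i v < 0) (hw : B i w < 0)
    (huv : u ≠ v) (huw : u ≠ w) (hvw : v ≠ w)
    (m : K × E × K) (hm : cyc B m m ≠ 0)
    (hmp : cyc B m ((0 : K), i, (0 : K)) = 0)
    (hmu : cyc B m (qc B u) = 0) (hmv : cyc B m (qc B v) = 0)
    (hmw : cyc B m (qc B w) = 0) :
    ∃ a b c : K, a ≠ 0 ∧ b ≠ 0 ∧ c ≠ 0 ∧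
      ((0 : K), i, (0 : K)) = a • qc B u + b • qc B v + c • qc B w ∧
      ¬ ((0 < a ∧ 0 < b ∧ 0 < c) ∨ (a < 0 ∧ b < 0 ∧ c < 0)) := by
  have hB : B.IsSymm := ⟨hsymm⟩
  have hdist {x y : E} (h : x ≠ y) : 0 < B (x - y) (x - y) := hpos _ (sub_ne_zero.2 h)
  obtain ⟨a, b, c, hp⟩ := exists_sum_qc_eq hB
    (fun x hx => by_contra fun h => (hpos x h).ne' hx) hdim huv huw hvw hm hmu hmv hmw hmp
  have hu' : B i u = b * B (u - v) (u - v) + c * B (u - w) (u - w) := by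
    simp [hsymm i, apply_eq_of_sum_qc_eq hB hp]
  have hv' : B i v = a * B (u - v) (u - v) + c * B (v - w) (v - w) := by
    rw [hsymm i, apply_eq_of_sum_qc_eq hB hp, B.apply_sub_sub_comm v u]
    simp
  have hw' : B i w = a * B (u - w) (u - w) + b * B (v - w) (v - w) := by
    rw [hsymm i, apply_eq_of_sum_qc_eq hB hp, B.apply_sub_sub_comm w u,
      B.apply_sub_sub_comm w v]
    simp
  have hsum := sum_apply_eq_of_sum_qc_eq hp
  simp only [← hsymm i, hi] at hsum
  obtain ⟨ha, hb, hc, hsign⟩ := ne_zero_and_not_same_sign (hdist huv) (hdist huw) (hdist hvw)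
    (hu' ▸ hu) (hv' ▸ hv) (hw' ▸ hw) (by rw [← hu', ← hv', ← hw']; linarith)
  exact ⟨a, b, c, ha, hb, hc, hp.symm, hsign⟩

/-- Three pairwise distinct collinear points of `H` give a linear relation
`p = a·q(u) + b·q(v) + c·q(w)` with all coefficients nonzero, not all of the same sign. -/
theorem collinear_relation
    (B : LinearMap.BilinForm K E)
    (heuc : ∀ x : K, 0 ≤ x → ∃ y : K, y * y = x)
    (hdim : Module.finrank K E = 2)
    (hsymm : ∀ x y : E, B x y = B y x)
    (hpos : ∀ x : E, x ≠ 0 → 0 < B x x)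
    (i : E) (hi : B i i = 1)
    (u v w : E) (hu : B i u < 0) (hv : B i v < 0) (hw : B i w < 0)
    (huv : u ≠ v) (huw : u ≠ w) (hvw : v ≠ w)
    (m : K × E × K) (hm : cyc B m m ≠ 0)
    (hmp : cyc B m ((0 : K), i, (0 : K)) = 0)
    (hmu : cyc B m (qc B u) = 0) (hmv : cyc B m (qc B v) = 0)
    (hmw : cyc B m (qc B w) = 0) :
    ∃ a b c : K, a ≠ 0 ∧ b ≠ 0 ∧ c ≠ 0 ∧
      ((0 : K), i, (0 : K)) = a • qc B u + b • qc B v + c • qc B w ∧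
      ¬ ((0 < a ∧ 0 < b ∧ 0 < c) ∨ (a < 0 ∧ b < 0 ∧ c < 0)) :=
  collinear_relation_general B hdim hsymm hpos i hi u v w hu hv hw huv huw hvw m hm hmp hmu hmv hmw
end
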